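/- Let n, m be real numbers with n > m > 3 and σ > 0. Define B(T) = -2π ∫₀^∞ [exp(-(1/T)((σ/r)^n - (σ/r)^m)) - 1] r² dr for T > 0. Then, as T → ∞, B(T) · T^{3/n} tends to -(2πσ³/n) Γ(-3/n), and this limit is positive. -/

import Mathlib

open Real Filter MeasureTheory Set Topology


lemma aux_abs_exp_sub_one (x : ℝ) : |Real.exp x - 1| ≤ |x| * Real.exp |x| := by
  rcases le_or_gt 0 x with hx | hx
  · rw [abs_of_nonneg hx, abs_of_nonneg (by nlinarith [Real.one_le_exp hx] : (0:ℝ) ≤ Real.exp x - 1)]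
    have h1 := Real.add_one_le_exp (-x)
    have h2 : Real.exp (-x) * Real.exp x = 1 := by rw [← Real.exp_add]; simp
    nlinarith [Real.exp_pos x]
  · have h1 := Real.add_one_le_exp x
    have h3 : Real.exp x ≤ 1 := Real.exp_le_one_iff.mpr hx.le
    rw [abs_of_neg hx, abs_of_nonpos (by linarith : Real.exp x - 1 ≤ 0)]
    have h4 : (1:ℝ) ≤ Real.exp (-x) := Real.one_le_exp (by linarith)
    nlinarith

/-- dominating function -/
noncomputable def mieBound (m : ℝ) (y : ℝ) : ℝ :=
  if y ≤ 1 then y ^ 2 else 2 * Real.exp 2 * y ^ (2 - m)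

lemma mieBound_spec {n m : ℝ} (hm : 3 < m) (hnm : m < n) {ε : ℝ} (hε0 : 0 ≤ ε) (hε1 : ε ≤ 1)
    {y : ℝ} (hy : 0 < y) :
    |(Real.exp (-(y ^ (-n) - ε * y ^ (-m))) - 1) * y ^ 2| ≤ mieBound m y := by
  have hym : (0:ℝ) < y ^ (-m) := Real.rpow_pos_of_pos hy _
  have hyn : (0:ℝ) < y ^ (-n) := Real.rpow_pos_of_pos hy _
  rw [abs_mul, abs_of_nonneg (by positivity : (0:ℝ) ≤ y ^ 2)]
  rcases le_or_gt y 1 with h1 | h1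
  · rw [mieBound, if_pos h1]
    have hmn : y ^ (-m) ≤ y ^ (-n) :=
      Real.rpow_le_rpow_of_exponent_ge hy h1 (by linarith)
    have hεb : ε * y ^ (-m) ≤ y ^ (-n) := by nlinarith
    have hexp : Real.exp (-(y ^ (-n) - ε * y ^ (-m))) ≤ 1 :=
      Real.exp_le_one_iff.mpr (by linarith)
    have habs : |Real.exp (-(y ^ (-n) - ε * y ^ (-m))) - 1| ≤ 1 := by
      rw [abs_of_nonpos (by linarith)]
      have := Real.exp_pos (-(y ^ (-n) - ε * y ^ (-m)))
      linarith
    nlinarith [sq_nonneg y]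
  · rw [mieBound, if_neg (not_le.mpr h1)]
    have hnm' : y ^ (-n) ≤ y ^ (-m) :=
      Real.rpow_le_rpow_of_exponent_le h1.le (by linarith)
    have hm1 : y ^ (-m) ≤ 1 :=
      Real.rpow_le_one_of_one_le_of_nonpos h1.le (by linarith)
    set x := -(y ^ (-n) - ε * y ^ (-m)) with hx
    have hxb : |x| ≤ 2 * y ^ (-m) := by
      rw [abs_le]
      constructor <;> [skip; skip] <;> · simp only [hx]; nlinarith
    have hx2 : |x| ≤ 2 := by nlinarith
    have h := aux_abs_exp_sub_one x
    have hexp2 : Real.exp |x| ≤ Real.exp 2 := Real.exp_le_exp.mpr hx2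
    have key : |Real.exp x - 1| ≤ 2 * y ^ (-m) * Real.exp 2 := by
      calc |Real.exp x - 1| ≤ |x| * Real.exp |x| := h
        _ ≤ (2 * y ^ (-m)) * Real.exp 2 := by
            apply mul_le_mul hxb hexp2 (Real.exp_pos _).le (by positivity)
    have hrw : y ^ (-m) * y ^ 2 = y ^ (2 - m) := by
      rw [show y ^ 2 = y ^ ((2:ℕ):ℝ) by rw [Real.rpow_natCast], ← Real.rpow_add hy]
      ring_nf
    calc |Real.exp x - 1| * y ^ 2 ≤ (2 * y ^ (-m) * Real.exp 2) * y ^ 2 := by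
          apply mul_le_mul_of_nonneg_right key (by positivity)
      _ = 2 * Real.exp 2 * y ^ (2 - m) := by rw [← hrw]; ring

lemma mieBound_integrable {m : ℝ} (hm : 3 < m) :
    IntegrableOn (mieBound m) (Ioi (0:ℝ)) := by
  have hsplit : Ioi (0:ℝ) = Ioc 0 1 ∪ Ioi 1 := (Set.Ioc_union_Ioi_eq_Ioi zero_le_one).symm
  rw [hsplit]
  apply IntegrableOn.union
  · exact IntegrableOn.congr_fun ((continuous_pow 2).integrableOn_Ioc)
      (fun y hy => by simp [mieBound, if_pos hy.2]) measurableSet_Ioc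
  · exact IntegrableOn.congr_fun
      ((integrableOn_Ioi_rpow_of_lt (by linarith : 2 - m < -1) one_pos).const_mul (2 * Real.exp 2))
      (fun y hy => by simp [mieBound, if_neg (not_le.mpr (show (1:ℝ) < y from hy)), mul_assoc]) measurableSet_Ioi

lemma rpow_continuousOn (p : ℝ) : ContinuousOn (fun y : ℝ => y ^ p) (Ioi 0) := fun y hy =>
  (Real.continuousAt_rpow_const y p (Or.inl (ne_of_gt hy))).continuousWithinAt

lemma exp_neg_mul_self_le_one {t : ℝ} (ht : 0 ≤ t) : Real.exp (-t) * t ≤ 1 := by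
  have h1 := Real.add_one_le_exp t
  have h2 : Real.exp (-t) * Real.exp t = 1 := by rw [← Real.exp_add]; simp
  nlinarith [Real.exp_pos t, Real.exp_pos (-t)]

lemma mie_limit_integral {n : ℝ} (hn : 3 < n) :
    ∫ y in Ioi (0:ℝ), (Real.exp (-(y ^ (-n))) - 1) * y ^ 2 = Real.Gamma (-(3/n)) / n := by
  have hn0 : (0:ℝ) < n := by linarith
  set m' : ℝ := (n + 3) / 2 with hm'def
  have hm' : 3 < m' := by rw [hm'def]; linarith
  have hm'n : m' < n := by rw [hm'def]; linarith
  set E : ℝ → ℝ := fun y => Real.exp (-(y ^ (-n))) with hE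
  set f₁ : ℝ → ℝ := fun y => (1 - E y) * y ^ 2 with hf₁
  set f₂ : ℝ → ℝ := fun y => (n / 3) * (E y * y ^ (2 - n)) with hf₂
  set G : ℝ → ℝ := fun y => (1 - E y) * y ^ 3 / 3 with hG
  -- derivative
  have hderiv : ∀ y ∈ Ioi (0:ℝ), HasDerivAt G (f₁ y - f₂ y) y := by
    intro y hy
    rw [mem_Ioi] at hy
    have h1 : HasDerivAt (fun y : ℝ => y ^ (-n)) (-n * y ^ (-n - 1)) y :=
      Real.hasDerivAt_rpow_const (Or.inl (ne_of_gt hy))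
    have h2 : HasDerivAt (fun y : ℝ => -(y ^ (-n))) (n * y ^ (-n - 1)) y := by
      have := h1.neg
      rw [neg_mul, neg_neg] at this
      exact this
    have h3 : HasDerivAt E (E y * (n * y ^ (-n - 1))) y := h2.exp
    have h4 : HasDerivAt (fun y : ℝ => 1 - E y) (-(E y * (n * y ^ (-n - 1)))) y := h3.const_sub 1
    have h5 : HasDerivAt (fun y : ℝ => y ^ (3:ℕ)) ((3:ℕ) * y ^ 2) y := by
      simpa using hasDerivAt_pow 3 y
    have h6 : HasDerivAt G _ y := (h4.mul h5).div_const 3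
    have hpow : y ^ (-n - 1) * y ^ (3:ℕ) = y ^ (2 - n) := by
      rw [show (y:ℝ) ^ (3:ℕ) = y ^ ((3:ℕ):ℝ) from (Real.rpow_natCast y 3).symm,
        ← Real.rpow_add hy]
      ring_nf
    convert h6 using 1
    push_cast
    linear_combination (E y * n / 3) * hpow
  -- value at 0
  have hG0 : G 0 = 0 := by simp [hG]
  -- continuity at 0 from the right
  have hcont : ContinuousWithinAt G (Ici (0:ℝ)) 0 := by
    rw [ContinuousWithinAt, hG0]
    apply squeeze_zero_norm' (a := fun y : ℝ => y ^ 3 / 3)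
    · filter_upwards [self_mem_nhdsWithin] with y (hy : (0:ℝ) ≤ y)
      have h1 : 0 ≤ y ^ (-n) := Real.rpow_nonneg hy _
      have h2 : E y ≤ 1 := Real.exp_le_one_iff.mpr (by linarith)
      have h3 : 0 < E y := Real.exp_pos _
      have h5 : (0:ℝ) ≤ y ^ 3 := by positivity
      rw [Real.norm_eq_abs, hG, abs_of_nonneg (by nlinarith : (0:ℝ) ≤ (1 - E y) * y ^ 3 / 3)]
      nlinarith
    · have : Tendsto (fun y : ℝ => y ^ 3 / 3) (𝓝 0) (𝓝 0) := by
        simpa using ((continuous_pow 3).div_const (3:ℝ)).tendsto 0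
      exact tendsto_nhdsWithin_of_tendsto_nhds this
  -- tendsto at infinity
  have htop : Tendsto G atTop (𝓝 0) := by
    apply squeeze_zero_norm' (a := fun y : ℝ => y ^ (3 - n))
    · filter_upwards [eventually_ge_atTop (1:ℝ)] with y hy1
      have hy : (0:ℝ) < y := lt_of_lt_of_le one_pos hy1
      have h1 : 0 ≤ y ^ (-n) := Real.rpow_nonneg hy.le _
      have h2 : 1 - E y ≤ y ^ (-n) := by
        have := Real.add_one_le_exp (-(y ^ (-n)))
        simp only [hE]
        linarith
      have h3 : E y ≤ 1 := Real.exp_le_one_iff.mpr (by linarith)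
      have h5 : (0:ℝ) ≤ y ^ 3 := by positivity
      have hpow : y ^ (-n) * y ^ (3:ℕ) = y ^ (3 - n) := by
        rw [show (y:ℝ) ^ (3:ℕ) = y ^ ((3:ℕ):ℝ) from (Real.rpow_natCast y 3).symm,
          ← Real.rpow_add hy]
        ring_nf
      rw [Real.norm_eq_abs, hG, abs_of_nonneg (by nlinarith : (0:ℝ) ≤ (1 - E y) * y ^ 3 / 3),
        ← hpow]
      nlinarith [Real.rpow_nonneg hy.le (-n)]
    · have := tendsto_rpow_neg_atTop (by linarith : (0:ℝ) < n - 3)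
      simpa [neg_sub] using this
  -- integrability of f₁
  have hEcont : ContinuousOn E (Ioi (0:ℝ)) :=
    Real.continuous_exp.comp_continuousOn (rpow_continuousOn (-n)).neg
  have hf₁meas : AEStronglyMeasurable f₁ (volume.restrict (Ioi 0)) :=
    ((continuousOn_const.sub hEcont).mul (continuous_pow 2).continuousOn).aestronglyMeasurable
      measurableSet_Ioi
  have hint₁ : IntegrableOn f₁ (Ioi (0:ℝ)) := by
    apply Integrable.mono' (mieBound_integrable hm') hf₁meas
    rw [ae_restrict_iff' measurableSet_Ioi]
    refine ae_of_all _ fun y hy => ?_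
    rw [mem_Ioi] at hy
    have h := mieBound_spec hm' hm'n le_rfl zero_le_one hy
    rw [Real.norm_eq_abs]
    calc |f₁ y| = |(Real.exp (-(y ^ (-n) - 0 * y ^ (-m'))) - 1) * y ^ 2| := by
          rw [hf₁, abs_mul, abs_mul, abs_sub_comm]
          norm_num
          left; rfl
      _ ≤ mieBound m' y := h
  -- integrability of f₂
  have hf₂cont : ContinuousOn f₂ (Ioi (0:ℝ)) :=
    continuousOn_const.mul (hEcont.mul (rpow_continuousOn (2 - n)))
  have hf₂bound : ∀ y : ℝ, 0 < y → y ≤ 1 → E y * y ^ (2 - n) ≤ 1 := by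
    intro y hy hy1
    have ht : (0:ℝ) ≤ y ^ (-n) := Real.rpow_nonneg hy.le _
    have h1 : y ^ (2 - n) = y ^ 2 * y ^ (-n) := by
      rw [show (y:ℝ) ^ (2:ℕ) = y ^ ((2:ℕ):ℝ) from (Real.rpow_natCast y 2).symm,
        ← Real.rpow_add hy]
      ring_nf
    have h2 : y ^ 2 ≤ 1 := by nlinarith
    have h3 := exp_neg_mul_self_le_one ht
    have h4 : (0:ℝ) ≤ y ^ 2 := by positivity
    have h5 : (0:ℝ) < E y := Real.exp_pos _
    calc E y * y ^ (2 - n) = (Real.exp (-(y ^ (-n))) * y ^ (-n)) * y ^ 2 := by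
          rw [h1, hE]; ring
      _ ≤ 1 * 1 := by
          apply mul_le_mul h3 h2 h4 zero_le_one
      _ = 1 := one_mul 1
  have hint₂ : IntegrableOn f₂ (Ioi (0:ℝ)) := by
    have hsplit : Ioi (0:ℝ) = Ioc 0 1 ∪ Ioi 1 := (Set.Ioc_union_Ioi_eq_Ioi zero_le_one).symm
    rw [hsplit]
    apply IntegrableOn.union
    · apply Integrable.mono' (g := fun _ : ℝ => n / 3)
      · exact (integrableOn_const_iff).mpr (Or.inr measure_Ioc_lt_top)
      · exact (hf₂cont.mono (Ioc_subset_Ioi_self)).aestronglyMeasurable measurableSet_Ioc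
      · rw [ae_restrict_iff' measurableSet_Ioc]
        refine ae_of_all _ fun y hy => ?_
        have h1 := hf₂bound y hy.1 hy.2
        have h2 : (0:ℝ) < E y := Real.exp_pos _
        have h3 : (0:ℝ) ≤ y ^ (2 - n) := Real.rpow_nonneg hy.1.le _
        show |n / 3 * (E y * y ^ (2 - n))| ≤ n / 3
        rw [abs_of_nonneg (by positivity)]
        nlinarith
    · apply Integrable.mono'
        (g := fun y : ℝ => (n / 3) * y ^ (2 - n))
        ((integrableOn_Ioi_rpow_of_lt (by linarith : 2 - n < -1) one_pos).const_mul (n / 3))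
      · exact (hf₂cont.mono (Ioi_subset_Ioi zero_le_one)).aestronglyMeasurable measurableSet_Ioi
      · rw [ae_restrict_iff' measurableSet_Ioi]
        refine ae_of_all _ fun y hy => ?_
        rw [mem_Ioi] at hy
        have hy0 : (0:ℝ) < y := lt_trans one_pos hy
        have h1 : 0 ≤ y ^ (-n) := Real.rpow_nonneg hy0.le _
        have h2 : E y ≤ 1 := Real.exp_le_one_iff.mpr (by linarith)
        have h3 : (0:ℝ) < E y := Real.exp_pos _
        have h4 : (0:ℝ) ≤ y ^ (2 - n) := Real.rpow_nonneg hy0.le _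
        show |n / 3 * (E y * y ^ (2 - n))| ≤ n / 3 * y ^ (2 - n)
        rw [abs_of_nonneg (by positivity)]
        nlinarith [mul_nonneg (sub_nonneg.mpr h2) h4, hn0.le]
  -- integration by parts
  have hIBP : (∫ y in Ioi (0:ℝ), (f₁ y - f₂ y)) = 0 - G 0 :=
    integral_Ioi_of_hasDerivAt_of_tendsto hcont hderiv (hint₁.sub hint₂) htop
  rw [hG0, sub_zero] at hIBP
  have hsub : (∫ y in Ioi (0:ℝ), (f₁ y - f₂ y))
      = (∫ y in Ioi (0:ℝ), f₁ y) - ∫ y in Ioi (0:ℝ), f₂ y := integral_sub hint₁ hint₂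
  have hEq : (∫ y in Ioi (0:ℝ), f₁ y) = ∫ y in Ioi (0:ℝ), f₂ y := by
    rw [hsub] at hIBP; linarith
  -- compute ∫ f₂ via substitution t = y ^ (-n)
  have h3n : (0:ℝ) < 1 - 3 / n := by
    have : 3 / n < 1 := (div_lt_one hn0).mpr (by linarith)
    linarith
  have hsubst := integral_comp_rpow_Ioi (fun t : ℝ => Real.exp (-t) * t ^ (-(3/n)))
    (by simp [ne_of_gt hn0] : (-n) ≠ 0)
  have hrhs : (∫ t in Ioi (0:ℝ), Real.exp (-t) * t ^ (-(3/n))) = Real.Gamma (1 - 3/n) := by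
    rw [Real.Gamma_eq_integral h3n]
    refine setIntegral_congr_fun measurableSet_Ioi fun t _ => ?_
    rw [show (1 - 3/n) - 1 = -(3/n) by ring]
  have hlhs : ∀ y ∈ Ioi (0:ℝ),
      (|(-n)| * y ^ ((-n) - 1)) • (Real.exp (-(y ^ (-n))) * (y ^ (-n)) ^ (-(3/n)))
        = n * (E y * y ^ (2 - n)) := by
    intro y hy
    rw [mem_Ioi] at hy
    have h1 : (y ^ (-n)) ^ (-(3/n)) = y ^ (3:ℝ) := by
      rw [← Real.rpow_mul hy.le]
      congr 1
      field_simp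
    have h2 : y ^ ((-n) - 1) * y ^ (3:ℝ) = y ^ (2 - n) := by
      rw [← Real.rpow_add hy]; ring_nf
    rw [smul_eq_mul, h1, abs_neg, abs_of_pos hn0, hE, ← h2]
    ring
  have hf₂val : (∫ y in Ioi (0:ℝ), f₂ y) = Real.Gamma (1 - 3/n) / 3 := by
    have e1 : (∫ y in Ioi (0:ℝ), n * (E y * y ^ (2 - n))) = Real.Gamma (1 - 3/n) := by
      rw [← hrhs, ← hsubst]
      exact setIntegral_congr_fun measurableSet_Ioi fun y hy => (hlhs y hy).symm
    have e2 : (∫ y in Ioi (0:ℝ), n * (E y * y ^ (2 - n)))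
        = n * ∫ y in Ioi (0:ℝ), E y * y ^ (2 - n) := integral_const_mul _ _
    have e3 : (∫ y in Ioi (0:ℝ), f₂ y)
        = (n / 3) * ∫ y in Ioi (0:ℝ), E y * y ^ (2 - n) := by
      rw [hf₂]; exact integral_const_mul _ _
    rw [e3]
    rw [e2] at e1
    linear_combination e1 / 3
  -- conclude
  have hneg : (∫ y in Ioi (0:ℝ), (E y - 1) * y ^ 2) = - ∫ y in Ioi (0:ℝ), f₁ y := by
    rw [← integral_neg]
    refine setIntegral_congr_fun measurableSet_Ioi fun y _ => ?_
    rw [hf₁]; ring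
  have hGam : Real.Gamma (1 - 3/n) = (-(3/n)) * Real.Gamma (-(3/n)) := by
    rw [show (1 : ℝ) - 3/n = -(3/n) + 1 by ring]
    exact Real.Gamma_add_one (neg_ne_zero.mpr (by positivity))
  rw [show (fun y : ℝ => (Real.exp (-(y ^ (-n))) - 1) * y ^ 2) = fun y : ℝ => (E y - 1) * y ^ 2
    from rfl] at *
  rw [hneg, hEq, hf₂val, hGam]
  field_simp

/-- High-temperature behavior for the Mie potential, `n > m > 3`, `σ > 0`:
`B(T) T^{3/n} → -(2πσ³/n) Γ(-3/n)` as `T → ∞`, and this limit is positive. -/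
theorem second_virial_high_temperature (n m σ : ℝ)
    (hm : 3 < m) (hnm : m < n) (hσ : 0 < σ)
    (B : ℝ → ℝ)
    (hB : ∀ T : ℝ, 0 < T → B T = -2 * π * ∫ r in Set.Ioi (0 : ℝ),
        (Real.exp (-(1 / T) * ((σ / r) ^ n - (σ / r) ^ m)) - 1) * r ^ 2) :
    Tendsto (fun T : ℝ => B T * T ^ (3 / n)) atTop
        (nhds (-(2 * π * σ ^ 3 / n) * Real.Gamma (-(3 / n))))
      ∧ 0 < -(2 * π * σ ^ 3 / n) * Real.Gamma (-(3 / n)) := by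
  have hn3 : (3:ℝ) < n := lt_trans hm hnm
  have hn0 : (0:ℝ) < n := by linarith
  have hm0 : (0:ℝ) < m := by linarith
  -- positivity of the limit
  have hGam1 : 0 < Real.Gamma (1 - 3/n) := Real.Gamma_pos_of_pos (by
    have : 3 / n < 1 := (div_lt_one hn0).mpr (by linarith)
    linarith)
  have hGamAdd : Real.Gamma (1 - 3/n) = (-(3/n)) * Real.Gamma (-(3/n)) := by
    rw [show (1:ℝ) - 3/n = -(3/n) + 1 by ring]
    exact Real.Gamma_add_one (neg_ne_zero.mpr (by positivity))
  have h3npos : (0:ℝ) < 3 / n := by positivity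
  have hGamneg : Real.Gamma (-(3/n)) < 0 := by nlinarith
  have hpos : 0 < -(2 * π * σ ^ 3 / n) * Real.Gamma (-(3 / n)) := by
    have hπ := Real.pi_pos
    have hc : 0 < 2 * π * σ ^ 3 / n := by positivity
    nlinarith
  refine ⟨?_, hpos⟩
  -- the substituted integrand family
  set F : ℝ → ℝ → ℝ :=
    fun T y => (Real.exp (-(y ^ (-n) - T ^ (m/n - 1) * y ^ (-m))) - 1) * y ^ 2 with hF
  -- dominated convergence
  have hDC : Tendsto (fun T => ∫ y in Ioi (0:ℝ), F T y) atTop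
      (𝓝 (∫ y in Ioi (0:ℝ), (Real.exp (-(y ^ (-n))) - 1) * y ^ 2)) := by
    apply tendsto_integral_filter_of_dominated_convergence (mieBound m)
    · refine Eventually.of_forall fun T => ?_
      apply ContinuousOn.aestronglyMeasurable _ measurableSet_Ioi
      exact ((Real.continuous_exp.comp_continuousOn
        (((rpow_continuousOn (-n)).sub
          (continuousOn_const.mul (rpow_continuousOn (-m)))).neg)).sub
            continuousOn_const).mul (continuous_pow 2).continuousOn
    · filter_upwards [eventually_ge_atTop (1:ℝ)] with T hT
      rw [ae_restrict_iff' measurableSet_Ioi]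
      refine ae_of_all _ fun y hy => ?_
      rw [mem_Ioi] at hy
      have hε0 : 0 ≤ T ^ (m/n - 1) := Real.rpow_nonneg (by linarith) _
      have hε1 : T ^ (m/n - 1) ≤ 1 := Real.rpow_le_one_of_one_le_of_nonpos hT (by
        have : m / n < 1 := (div_lt_one hn0).mpr hnm
        linarith)
      rw [Real.norm_eq_abs]
      exact mieBound_spec hm hnm hε0 hε1 hy
    · exact mieBound_integrable hm
    · rw [ae_restrict_iff' measurableSet_Ioi]
      refine ae_of_all _ fun y hy => ?_
      rw [mem_Ioi] at hy
      have h1 : Tendsto (fun T : ℝ => T ^ (m/n - 1)) atTop (𝓝 0) := by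
        have h := tendsto_rpow_neg_atTop (by
          have : m / n < 1 := (div_lt_one hn0).mpr hnm
          linarith : (0:ℝ) < 1 - m/n)
        simpa [show -(1 - m/n) = m/n - 1 by ring] using h
      have h2 : Continuous (fun ε : ℝ =>
          (Real.exp (-(y ^ (-n) - ε * y ^ (-m))) - 1) * y ^ 2) := by
        exact ((Real.continuous_exp.comp
          ((continuous_const.sub (continuous_id.mul continuous_const)).neg)).sub
            continuous_const).mul continuous_const
      have h3 := (h2.tendsto 0).comp h1
      simpa only [Function.comp_def, zero_mul, sub_zero] using h3
  rw [mie_limit_integral hn3] at hDC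
  have hDC2 : Tendsto (fun T => (-(2*π*σ^3)) * ∫ y in Ioi (0:ℝ), F T y) atTop
      (𝓝 ((-(2*π*σ^3)) * (Real.Gamma (-(3/n)) / n))) := hDC.const_mul _
  rw [show (-(2*π*σ^3)) * (Real.Gamma (-(3/n)) / n)
      = -(2 * π * σ ^ 3 / n) * Real.Gamma (-(3 / n)) by ring] at hDC2
  apply Tendsto.congr' _ hDC2
  filter_upwards [eventually_gt_atTop (0:ℝ)] with T hT
  -- change of variables r = c * y, c = σ * T ^ (-(1/n))
  set c : ℝ := σ * T ^ (-(1/n)) with hc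
  have hTn : (0:ℝ) < T ^ (-(1/n)) := Real.rpow_pos_of_pos hT _
  have hc0 : 0 < c := by positivity
  set g : ℝ → ℝ :=
    fun r => (Real.exp (-(1 / T) * ((σ / r) ^ n - (σ / r) ^ m)) - 1) * r ^ 2 with hg
  have hsub := integral_comp_mul_left_Ioi g 0 hc0
  rw [mul_zero, smul_eq_mul] at hsub
  have h7 : (∫ r in Ioi (0:ℝ), g r) = c * ∫ x in Ioi (0:ℝ), g (c * x) := by
    rw [hsub]
    field_simp
  have h8 : ∀ x ∈ Ioi (0:ℝ), g (c * x) = F T x * c ^ 2 := by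
    intro x hx
    rw [mem_Ioi] at hx
    have e1 : σ / (c * x) = T ^ (1/n) / x := by
      rw [hc, Real.rpow_neg hT.le]
      field_simp
      try ring
    have e2 : (T ^ (1/n) / x) ^ n = T / x ^ n := by
      rw [Real.div_rpow (Real.rpow_nonneg hT.le _) hx.le, ← Real.rpow_mul hT.le,
        one_div_mul_cancel hn0.ne', Real.rpow_one]
    have e3 : (T ^ (1/n) / x) ^ m = T ^ (m/n) / x ^ m := by
      rw [Real.div_rpow (Real.rpow_nonneg hT.le _) hx.le, ← Real.rpow_mul hT.le]
      rw [show 1/n * m = m/n by ring]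
    have e4 : (1:ℝ)/T * (T / x ^ n) = x ^ (-n) := by
      rw [Real.rpow_neg hx.le]
      field_simp
    have e5 : (1:ℝ)/T * (T ^ (m/n) / x ^ m) = T ^ (m/n - 1) * x ^ (-m) := by
      rw [Real.rpow_neg hx.le, Real.rpow_sub hT, Real.rpow_one]
      field_simp
      try ring
    show (Real.exp (-(1 / T) * ((σ / (c*x)) ^ n - (σ / (c*x)) ^ m)) - 1) * (c*x) ^ 2
      = (Real.exp (-(x ^ (-n) - T ^ (m/n - 1) * x ^ (-m))) - 1) * x ^ 2 * c ^ 2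
    rw [e1, e2, e3]
    rw [mul_pow]
    rw [show -(1/T) * (T / x ^ n - T ^ (m/n) / x ^ m)
        = -((1:ℝ)/T * (T / x ^ n) - (1:ℝ)/T * (T ^ (m/n) / x ^ m)) by ring, e4, e5]
    ring
  have h9 : (∫ x in Ioi (0:ℝ), g (c * x)) = (∫ x in Ioi (0:ℝ), F T x) * c ^ 2 := by
    rw [← integral_mul_const]
    exact setIntegral_congr_fun measurableSet_Ioi h8
  -- powers of c
  have hc3 : c ^ 3 * T ^ (3/n) = σ ^ 3 := by
    rw [hc, mul_pow, ← Real.rpow_natCast (T ^ (-(1/n))) 3, ← Real.rpow_mul hT.le]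
    rw [mul_assoc, ← Real.rpow_add hT,
      show -(1/n) * ((3:ℕ):ℝ) + 3/n = 0 by push_cast; ring, Real.rpow_zero, mul_one]
  -- conclude
  show (-(2*π*σ^3)) * ∫ y in Ioi (0:ℝ), F T y = B T * T ^ (3/n)
  rw [hB T hT, ← hg, h7, h9]
  linear_combination (2 * π * (∫ y in Ioi (0:ℝ), F T y)) * hc3
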